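/- arXiv:2206.04275 — 2 statements merged into one kernel-verified Lean document; each statement's English description precedes it below -/
import Mathlib

section
/- Suppose 0 < d₁ ≤ 0.1 and 57·√d₁ < d₂ < 1, and let a be a positive integer with a ≤ n. Then there exists a finite set Σ_V ⊆ S^{n-1} with |Σ_V| < (3/√d₁)^{2a}·(n·e/a)^a such that: (i) every point of V lies within Euclidean distance 3·√d₁ of some point of Σ_V; and (ii) every y ∈ Σ_V has at most a nonzero coordinates and satisfies Σ_{i : 1/(2a) < |y_i|² ≤ 4/b} |y_i|² ≥ d₂ − 57·√d₁. -/
/-!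
A point `x ∈ V` has at most `a` coordinates of squared modulus above `1/a`, and less than `d₁` of
its mass lies off them, so restricting `x` to such a support `T` and renormalizing moves it by at
most `√(2 d₁)`. The unit sphere of each coordinate subspace `ℂ^T ≅ ℝ^(2a)` has a `√d₁`-net of size
`(1 + 2/√d₁)^(2a)` (a maximal separated set, counted by volume), and there are
`C(n, a) ≤ (n e / a)^a` supports. Condition (ii) survives the approximation because the squared
coordinates of two unit vectors differ in `ℓ¹` by at most twice their distance, while a coordinate
of `x` in the band `(1/a, 1/b]` whose approximant leaves `(1/(2a), 4/b]` must move by half its mass.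
-/

open Finset MeasureTheory Metric Module
open scoped NNReal ENNReal

theorem Nat.choose_le_mul_exp_one_div_pow (n k : ℕ) :
    (n.choose k : ℝ) ≤ (n * Real.exp 1 / k) ^ k := by
  rcases k.eq_zero_or_pos with rfl | hk
  · simp
  calc (n.choose k : ℝ) ≤ n ^ k / k.factorial := choose_le_pow_div k n
    _ = (n / k) ^ k * (k ^ k / k.factorial) := by
        rw [div_pow, div_mul_div_cancel₀ (by positivity)]
    _ ≤ (n / k) ^ k * Real.exp k := by
        gcongr; exact Real.pow_div_factorial_le_exp _ (by positivity) k
    _ = _ := by rw [← Real.exp_one_pow, ← mul_pow, div_mul_eq_mul_div]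

theorem Nat.choose_mul_one_add_two_div_pow_lt {n a : ℕ} (ha : 1 ≤ a) (han : a ≤ n) {ε : ℝ}
    (hε : 0 < ε) (hε1 : ε < 1) :
    n.choose a * (1 + 2 / ε) ^ (2 * a) < (3 / ε) ^ (2 * a) * (n * Real.exp 1 / a) ^ a := by
  have hbase : 1 + 2 / ε < 3 / ε := by
    rw [lt_div_iff₀ hε, add_mul, div_mul_cancel₀ _ hε.ne']; linarith
  calc n.choose a * (1 + 2 / ε) ^ (2 * a) < n.choose a * (3 / ε) ^ (2 * a) :=
        mul_lt_mul_of_pos_left (pow_lt_pow_left₀ hbase (by positivity) (by omega))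
          (by exact_mod_cast Nat.choose_pos han)
    _ ≤ _ := by
        rw [mul_comm]
        exact mul_le_mul_of_nonneg_left (choose_le_mul_exp_one_div_pow n a) (by positivity)

theorem sum_ite_band_le {ι : Type*} (s : Finset ι) {u v w : ι → ℝ} {L U L' U' : ℝ}
    (hw : ∀ i, 0 ≤ w i) (hL : 2 * L' ≤ L) (hU : 3 * U ≤ U')
    (huv : ∀ i, L < u i → u i ≤ U → u i ≤ v i ∧ v i ≤ 2 * u i) :
    ∑ i ∈ s, (if L < u i ∧ u i ≤ U then u i else 0) ≤
      ∑ i ∈ s, (if L' < w i ∧ w i ≤ U' then w i else 0) + 2 * ∑ i ∈ s, |v i - w i| := by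
  rw [mul_sum, ← sum_add_distrib]
  refine sum_le_sum fun i _ => ?_
  have := le_abs_self (v i - w i)
  have := neg_abs_le (v i - w i)
  split_ifs with hu hw'
  · linarith [huv i hu.1 hu.2]
  · have := huv i hu.1 hu.2
    rcases le_or_gt (w i) L' with h | h
    · linarith
    · linarith [lt_of_not_ge fun h' => hw' ⟨h, h'⟩]
  · linarith [hw i]
  · linarith [abs_nonneg (v i - w i)]

theorem Function.ncard_support_le_card {α M : Type*} [Zero M] {f : α → M} {T : Finset α}
    (h : ∀ i ∉ T, f i = 0) : (support f).ncard ≤ T.card :=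
  (Set.ncard_le_ncard (support_subset_iff'.mpr h) T.finite_toSet).trans_eq (Set.ncard_coe_finset T)

section Packing

variable {E : Type*} [NormedAddCommGroup E] [NormedSpace ℝ E] [FiniteDimensional ℝ E]

theorem Metric.IsSeparated.card_le_of_subset_closedBall {ε : ℝ≥0} (hε : 0 < ε) {S : Finset E}
    (hS : (S : Set E) ⊆ closedBall 0 1) (hsep : IsSeparated ε (S : Set E)) :
    (S.card : ℝ) ≤ (1 + 2 / ε) ^ finrank ℝ E := by
  borelize E
  set μ : Measure E := Measure.addHaar
  have hε' : (0 : ℝ) < ε / 2 := by positivity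
  have hdisj : (S : Set E).PairwiseDisjoint fun y => ball y (ε / 2) := fun y hy z hz hyz =>
    ball_disjoint_ball <| by
      have h : (ε : ℝ≥0∞) < edist y z := hsep hy hz hyz
      rw [edist_nndist, ENNReal.coe_lt_coe, ← NNReal.coe_lt_coe, coe_nndist] at h
      linarith
  have hsub : ⋃ y ∈ S, ball y (ε / 2) ⊆ ball 0 (1 + ε / 2) :=
    Set.iUnion₂_subset fun y hy z hz => by
      have := mem_closedBall_zero_iff.mp (hS hy)
      rw [mem_ball] at hz ⊢
      linarith [dist_triangle z y 0, dist_zero_right y]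
  have hvol : S.card * (ENNReal.ofReal ((ε / 2) ^ finrank ℝ E) * μ (ball 0 1)) ≤
      ENNReal.ofReal ((1 + ε / 2) ^ finrank ℝ E) * μ (ball 0 1) :=
    calc _ = ∑ y ∈ S, μ (ball y (ε / 2)) := by simp [μ.addHaar_ball_of_pos _ hε']
      _ = μ (⋃ y ∈ S, ball y (ε / 2)) :=
        (measure_biUnion_finset hdisj fun _ _ => measurableSet_ball).symm
      _ ≤ μ (ball 0 (1 + ε / 2)) := measure_mono hsub
      _ = _ := μ.addHaar_ball_of_pos _ (by positivity)
  rw [← mul_assoc, ENNReal.mul_le_mul_iff_left (measure_ball_pos μ 0 one_pos).ne'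
    measure_ball_lt_top.ne, ← ENNReal.ofReal_natCast, ← ENNReal.ofReal_mul (by positivity),
    ENNReal.ofReal_le_ofReal_iff (by positivity), ← le_div_iff₀ (by positivity),
    ← div_pow] at hvol
  refine hvol.trans_eq (congrArg (· ^ _) ?_)
  field_simp
  ring

theorem Metric.packingNumber_le_of_subset_closedBall {ε : ℝ≥0} (hε : 0 < ε) {A : Set E}
    (hA : A ⊆ closedBall 0 1) :
    packingNumber ε A ≤ ⌊(1 + 2 / (ε : ℝ)) ^ finrank ℝ E⌋₊ := by
  set m := ⌊(1 + 2 / (ε : ℝ)) ^ finrank ℝ E⌋₊ with hm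
  refine iSup_le fun C => iSup_le fun hCA => iSup_le fun hC => ?_
  by_contra! hlt
  obtain ⟨S, hSC, hS⟩ := Set.exists_subset_encard_eq (Order.add_one_le_of_lt hlt)
  lift S to Finset E using Set.finite_of_encard_eq_coe hS
  have hcard := (hC.subset hSC).card_le_of_subset_closedBall hε ((hSC.trans hCA).trans hA)
  have hS : S.card = m + 1 := by
    exact_mod_cast (Set.encard_coe_eq_coe_finsetCard S).symm.trans hS
  rw [hS, hm] at hcard
  exact (Nat.lt_floor_add_one _).not_ge (by exact_mod_cast hcard)

theorem Metric.exists_finset_subset_isCover_card_le {ε : ℝ≥0} (hε : 0 < ε) {A : Set E}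
    (hA : A ⊆ closedBall 0 1) :
    ∃ N : Finset E, (N : Set E) ⊆ A ∧ (N.card : ℝ) ≤ (1 + 2 / ε) ^ finrank ℝ E ∧
      IsCover ε A N := by
  have hpack := packingNumber_le_of_subset_closedBall hε hA
  have htop : packingNumber ε A ≠ ⊤ := ne_top_of_le_ne_top (by simp) hpack
  have hfin : (maximalSeparatedSet ε A).Finite := by
    rw [← Set.encard_ne_top_iff, encard_maximalSeparatedSet htop]; exact htop
  refine ⟨hfin.toFinset, by simpa using maximalSeparatedSet_subset, ?_, by
    simpa using isCover_maximalSeparatedSet htop⟩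
  have hcard : hfin.toFinset.card ≤ ⌊(1 + 2 / (ε : ℝ)) ^ finrank ℝ E⌋₊ := by
    have := (encard_maximalSeparatedSet htop).trans_le hpack
    rwa [hfin.encard_eq_coe_toFinset_card, Nat.cast_le] at this
  exact (Nat.cast_le.mpr hcard).trans (Nat.floor_le (by positivity))

end Packing

namespace EuclideanSpace

variable {𝕜 ι : Type*} [RCLike 𝕜] [Fintype ι]

theorem finrank_real :
    finrank ℝ (EuclideanSpace 𝕜 ι) = finrank ℝ 𝕜 * Fintype.card ι := by
  rw [← Module.finrank_mul_finrank ℝ 𝕜, finrank_euclideanSpace]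

theorem card_filter_lt_sq_norm_mul_le (x : EuclideanSpace 𝕜 ι) (c : ℝ) :
    (#{i | c < ‖x i‖ ^ 2} : ℝ) * c ≤ ‖x‖ ^ 2 := by
  rw [norm_sq_eq, ← nsmul_eq_mul]
  exact (card_nsmul_le_sum _ _ _ fun i hi => (mem_filter.mp hi).2.le).trans
    (sum_le_sum_of_subset_of_nonneg (subset_univ _) fun i _ _ => by positivity)

theorem sum_abs_sq_norm_sub_le (x y : EuclideanSpace 𝕜 ι) :
    ∑ i, |‖x i‖ ^ 2 - ‖y i‖ ^ 2| ≤ dist x y * (‖x‖ + ‖y‖) := by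
  have hpt (i : ι) :
      |‖x i‖ ^ 2 - ‖y i‖ ^ 2| ≤ ‖x i - y i‖ * ‖x i‖ + ‖x i - y i‖ * ‖y i‖ := by
    rw [sq_sub_sq, abs_mul, abs_of_nonneg (add_nonneg (norm_nonneg _) (norm_nonneg _)),
      ← mul_add, mul_comm]
    exact mul_le_mul_of_nonneg_right (abs_norm_sub_norm_le _ _) (by positivity)
  have hdist : dist x y = √(∑ i, ‖x i - y i‖ ^ 2) := by simp_rw [dist_eq, dist_eq_norm]
  calc ∑ i, |‖x i‖ ^ 2 - ‖y i‖ ^ 2|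
      ≤ ∑ i, ‖x i - y i‖ * ‖x i‖ + ∑ i, ‖x i - y i‖ * ‖y i‖ := by
        rw [← sum_add_distrib]; exact sum_le_sum fun i _ => hpt i
    _ ≤ dist x y * ‖x‖ + dist x y * ‖y‖ := by
        rw [hdist, norm_eq, norm_eq]
        exact add_le_add (Real.sum_mul_le_sqrt_mul_sqrt _ _ _)
          (Real.sum_mul_le_sqrt_mul_sqrt _ _ _)
    _ = _ := by ring

noncomputable def bandMass (x : EuclideanSpace 𝕜 ι) (L U : ℝ) : ℝ :=
  ∑ i, if L < ‖x i‖ ^ 2 ∧ ‖x i‖ ^ 2 ≤ U then ‖x i‖ ^ 2 else 0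

theorem bandMass_le_bandMass_add_dist {x x' y : EuclideanSpace 𝕜 ι} (hx' : ‖x'‖ = 1)
    (hy : ‖y‖ = 1) {L U L' U' : ℝ} (hL : 2 * L' ≤ L) (hU : 3 * U ≤ U')
    (hxx' : ∀ i, L < ‖x i‖ ^ 2 → ‖x i‖ ^ 2 ≤ U →
      ‖x i‖ ^ 2 ≤ ‖x' i‖ ^ 2 ∧ ‖x' i‖ ^ 2 ≤ 2 * ‖x i‖ ^ 2) :
    bandMass x L U ≤ bandMass y L' U' + 4 * dist x' y := by
  have hband := sum_ite_band_le univ (w := fun i => ‖y i‖ ^ 2) (fun i => by positivity) hL hU hxx'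
  have hfluct := sum_abs_sq_norm_sub_le x' y
  rw [hx', hy] at hfluct
  unfold bandMass
  linarith

section DecidableEq

variable [DecidableEq ι]

theorem exists_norm_eq_one_supported_dist_le {x : EuclideanSpace 𝕜 ι} (hx : ‖x‖ = 1)
    (T : Finset ι) {t : ℝ} (ht : ∑ i ∈ Tᶜ, ‖x i‖ ^ 2 ≤ t) (ht1 : t < 1) :
    ∃ x' : EuclideanSpace 𝕜 ι, ‖x'‖ = 1 ∧ (∀ i ∉ T, x' i = 0) ∧ dist x x' ≤ √(2 * t) ∧
      ∀ i ∈ T, ‖x i‖ ^ 2 ≤ ‖x' i‖ ^ 2 ∧ (1 - t) * ‖x' i‖ ^ 2 ≤ ‖x i‖ ^ 2 := by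
  set s := ∑ i ∈ T, ‖x i‖ ^ 2
  set τ := ∑ i ∈ Tᶜ, ‖x i‖ ^ 2
  have hsτ : s + τ = 1 := by rw [sum_add_sum_compl, ← norm_sq_eq, hx, one_pow]
  have hτ : 0 ≤ τ := sum_nonneg fun i _ => by positivity
  have hs : 0 < s := by linarith
  set σ := √s
  have hσ : 0 < σ := Real.sqrt_pos.mpr hs
  have hσs : σ ^ 2 = s := Real.sq_sqrt hs.le
  have hσ1 : σ ≤ 1 := Real.sqrt_le_one.mpr (by linarith)
  set x' : EuclideanSpace 𝕜 ι := WithLp.toLp 2 fun i => if i ∈ T then (σ⁻¹ : 𝕜) * x i else 0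
  have hx'_T : ∀ i ∈ T, ‖x' i‖ ^ 2 = ‖x i‖ ^ 2 / s := fun i hi => by
    simp [x', hi, mul_pow, ← hσs, div_eq_inv_mul, abs_of_pos hσ]
  have hx'_Tc : ∀ i ∉ T, x' i = 0 := fun i hi => by simp [x', hi]
  have hdist_T : ∀ i ∈ T, dist (x i) (x' i) ^ 2 = (σ⁻¹ - 1) ^ 2 * ‖x i‖ ^ 2 := fun i hi => by
    have : x i - x' i = ((1 - σ⁻¹ : ℝ) : 𝕜) * x i := by simp [x', hi]; ring
    rw [dist_eq_norm, this, norm_mul, RCLike.norm_ofReal, mul_pow, sq_abs]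
    ring
  refine ⟨x', ?_, hx'_Tc, ?_, fun i hi => ?_⟩
  · have hTc : ∑ i ∈ Tᶜ, ‖x' i‖ ^ 2 = 0 :=
      sum_eq_zero fun i hi => by simp [hx'_Tc i (mem_compl.mp hi)]
    rw [norm_eq, Real.sqrt_eq_one, ← sum_add_sum_compl T, sum_congr rfl hx'_T, hTc, ← sum_div,
      add_zero, div_self hs.ne']
  · have hTc : ∑ i ∈ Tᶜ, dist (x i) (x' i) ^ 2 = τ :=
      sum_congr rfl fun i hi => by rw [hx'_Tc i (mem_compl.mp hi), dist_zero_right]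
    rw [dist_eq, ← sum_add_sum_compl T, sum_congr rfl hdist_T, hTc, ← mul_sum]
    refine Real.sqrt_le_sqrt ?_
    -- the renormalization costs `(1 - σ) ^ 2 ≤ (1 - σ ^ 2) ^ 2 = τ ^ 2 ≤ τ`
    have : (σ⁻¹ - 1) ^ 2 * s = (1 - σ) ^ 2 := by rw [← hσs]; field_simp
    nlinarith
  · rw [hx'_T i hi, le_div_iff₀ hs, mul_div_assoc', div_le_iff₀ hs]
    constructor <;> nlinarith [sq_nonneg ‖x i‖]

theorem exists_sparse_unit_dist_le {x : EuclideanSpace 𝕜 ι} (hx : ‖x‖ = 1) {a : ℕ} (ha : 1 ≤ a)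
    {t : ℝ} (ht : (∑ i, if ‖x i‖ ^ 2 ≤ 1 / (a : ℝ) then ‖x i‖ ^ 2 else 0) ≤ t)
    (ht1 : t ≤ 1 / 2) :
    ∃ x' : EuclideanSpace 𝕜 ι, ‖x'‖ = 1 ∧ (Function.support fun i => x' i).ncard ≤ a ∧
      dist x x' ≤ √(2 * t) ∧
      ∀ i, 1 / (a : ℝ) < ‖x i‖ ^ 2 → ‖x i‖ ^ 2 ≤ ‖x' i‖ ^ 2 ∧ ‖x' i‖ ^ 2 ≤ 2 * ‖x i‖ ^ 2 := by
  set T : Finset ι := {i | 1 / (a : ℝ) < ‖x i‖ ^ 2}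
  have hT : T.card ≤ a := by
    have := card_filter_lt_sq_norm_mul_le x (1 / a)
    rw [hx, one_pow, mul_one_div, div_le_one (Nat.cast_pos.mpr ha)] at this
    exact_mod_cast this
  have htail : ∑ i ∈ Tᶜ, ‖x i‖ ^ 2 ≤ t := by
    rw [compl_filter, sum_filter]
    simp_rw [not_lt]
    exact ht
  obtain ⟨x', hx', hx'T, hxx', hx'x⟩ :=
    exists_norm_eq_one_supported_dist_le hx T htail (by linarith)
  refine ⟨x', hx', (Function.ncard_support_le_card hx'T).trans hT, hxx', fun i hi => ?_⟩
  obtain ⟨hle, hge⟩ := hx'x i (mem_filter.mpr ⟨mem_univ _, hi⟩)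
  exact ⟨hle, by nlinarith [sq_nonneg ‖x' i‖]⟩

noncomputable def extendByZero (T : Finset ι) :
    EuclideanSpace 𝕜 T →ₗᵢ[𝕜] EuclideanSpace 𝕜 ι where
  toFun v := WithLp.toLp 2 fun i => if h : i ∈ T then v ⟨i, h⟩ else 0
  map_add' v w := by ext i; by_cases h : i ∈ T <;> simp [h]
  map_smul' c v := by ext i; by_cases h : i ∈ T <;> simp [h]
  norm_map' v := by
    rw [← sq_eq_sq₀ (norm_nonneg _) (norm_nonneg _), norm_sq_eq, norm_sq_eq,
      ← sum_subset (subset_univ T) fun i _ hi => by simp [hi], ← sum_coe_sort]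
    simp

theorem extendByZero_apply (T : Finset ι) (v : EuclideanSpace 𝕜 T) (i : ι) :
    extendByZero T v i = if h : i ∈ T then v ⟨i, h⟩ else 0 := rfl

theorem exists_net_unit_supported (T : Finset ι) {ε : ℝ} (hε : 0 < ε) :
    ∃ N : Finset (EuclideanSpace 𝕜 ι), (∀ y ∈ N, ‖y‖ = 1 ∧ ∀ i ∉ T, y i = 0) ∧
      (N.card : ℝ) ≤ (1 + 2 / ε) ^ (finrank ℝ 𝕜 * T.card) ∧
      ∀ x : EuclideanSpace 𝕜 ι, ‖x‖ = 1 → (∀ i ∉ T, x i = 0) → ∃ y ∈ N, dist x y ≤ ε := by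
  lift ε to ℝ≥0 using hε.le
  obtain ⟨N, hN_sphere, hN_card, hN_cover⟩ := exists_finset_subset_isCover_card_le
    (NNReal.coe_pos.mp hε) (sphere_subset_closedBall (x := (0 : EuclideanSpace 𝕜 T)))
  refine ⟨N.image (extendByZero T), ?_, ?_, fun x hx hxT => ?_⟩
  · simp only [mem_image, forall_exists_index, and_imp, forall_apply_eq_imp_iff₂]
    exact fun z hz =>
      ⟨by simpa using hN_sphere hz, fun i hi => by simp [extendByZero_apply, hi]⟩
  · rw [finrank_real, Fintype.card_coe] at hN_card
    exact (Nat.cast_le.mpr card_image_le).trans hN_card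
  · set v : EuclideanSpace 𝕜 T := WithLp.toLp 2 fun j => x j
    have hxv : extendByZero T v = x := by
      ext i
      by_cases hi : i ∈ T <;> simp [extendByZero_apply, hi, v, hxT]
    obtain ⟨z, hz, hvz⟩ := hN_cover (x := v) (by
      rw [mem_sphere_zero_iff_norm, ← (extendByZero T).norm_map, hxv, hx])
    refine ⟨extendByZero T z, mem_image_of_mem _ hz, ?_⟩
    rw [← hxv, LinearIsometry.dist_map]
    simpa [edist_dist] using hvz

theorem exists_net_unit_sparse {a : ℕ} (ha : a ≤ Fintype.card ι) {ε : ℝ} (hε : 0 < ε) :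
    ∃ N : Finset (EuclideanSpace 𝕜 ι),
      (∀ y ∈ N, ‖y‖ = 1 ∧ (Function.support fun i => y i).ncard ≤ a) ∧
      (N.card : ℝ) ≤ (Fintype.card ι).choose a * (1 + 2 / ε) ^ (finrank ℝ 𝕜 * a) ∧
      ∀ x : EuclideanSpace 𝕜 ι, ‖x‖ = 1 → (Function.support fun i => x i).ncard ≤ a →
        ∃ y ∈ N, dist x y ≤ ε := by
  choose M hM_unit hM_card hM_cover using
    fun T : Finset ι => exists_net_unit_supported (𝕜 := 𝕜) T hε
  refine ⟨(powersetCard a univ).biUnion M, ?_, ?_, fun x hx hxa => ?_⟩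
  · simp only [mem_biUnion, mem_powersetCard, forall_exists_index, and_imp]
    intro y T _ hTa hyT
    exact ⟨(hM_unit T y hyT).1, hTa ▸ Function.ncard_support_le_card (hM_unit T y hyT).2⟩
  · calc (((powersetCard a univ).biUnion M).card : ℝ)
        ≤ ∑ T ∈ powersetCard a univ, ((M T).card : ℝ) := by exact_mod_cast card_biUnion_le
      _ ≤ ∑ T ∈ powersetCard a univ, (1 + 2 / ε) ^ (finrank ℝ 𝕜 * a) :=
          sum_le_sum fun T hT => (mem_powersetCard.mp hT).2 ▸ hM_card T
      _ = _ := by rw [sum_const, card_powersetCard, card_univ, nsmul_eq_mul]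
  · rw [Set.ncard_eq_toFinset_card _ (Set.toFinite _)] at hxa
    obtain ⟨T, hST, -, hTa⟩ :=
      exists_subsuperset_card_eq (subset_univ _) hxa (by simpa using ha)
    obtain ⟨y, hy, hxy⟩ := hM_cover T x hx fun i hi => by
      by_contra h
      exact hi (hST (by simpa using h))
    exact ⟨y, mem_biUnion.mpr ⟨T, mem_powersetCard.mpr ⟨subset_univ T, hTa⟩, hy⟩, hxy⟩

end DecidableEq

end EuclideanSpace

theorem stmt5_general (n : ℕ) (a : ℕ) (ha : 1 ≤ a) (han : a ≤ n)
    (b : ℝ) (hb : 1 ≤ b) (d₁ d₂ : ℝ) (hd₁ : 0 < d₁) (hd₁' : d₁ ≤ 0.1) :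
    ∃ SigmaV : Finset (EuclideanSpace ℂ (Fin n)),
      (∀ y ∈ SigmaV, ‖y‖ = 1) ∧
      ((SigmaV.card : ℝ) < (3 / Real.sqrt d₁) ^ (2 * a) * ((n : ℝ) * Real.exp 1 / a) ^ a) ∧
      (∀ x : EuclideanSpace ℂ (Fin n), ‖x‖ = 1 →
        (∑ i, if ‖x i‖ ^ 2 ≤ 1 / (a : ℝ) then ‖x i‖ ^ 2 else 0) < d₁ →
        d₂ ≤ (∑ i, if 1 / (a : ℝ) < ‖x i‖ ^ 2 ∧ ‖x i‖ ^ 2 ≤ 1 / b then ‖x i‖ ^ 2 else 0) →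
        ∃ y ∈ SigmaV, dist x y ≤ 3 * Real.sqrt d₁) ∧
      (∀ y ∈ SigmaV,
        (Function.support fun i => y i).ncard ≤ a ∧
        d₂ - 57 * Real.sqrt d₁ ≤
          ∑ i, if 1 / (2 * (a : ℝ)) < ‖y i‖ ^ 2 ∧ ‖y i‖ ^ 2 ≤ 4 / b then ‖y i‖ ^ 2 else 0) := by
  have hε : 0 < √d₁ := Real.sqrt_pos.mpr hd₁
  have hd₁_half : d₁ ≤ 1 / 2 := by norm_num at hd₁' ⊢; linarith
  have hε1 : √d₁ < 1 := (Real.sqrt_lt' one_pos).mpr (by linarith)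
  obtain ⟨N, hN, hN_card, hN_cover⟩ :=
    EuclideanSpace.exists_net_unit_sparse (𝕜 := ℂ) (ι := Fin n) (by simpa using han) hε
  rw [Complex.finrank_real_complex, Fintype.card_fin] at hN_card
  refine ⟨{y ∈ N | d₂ - 57 * √d₁ ≤ EuclideanSpace.bandMass y (1 / (2 * a)) (4 / b)},
    fun y hy => (hN y (mem_filter.mp hy).1).1, ?_, fun x hx hsmall hbig => ?_,
    fun y hy => ⟨(hN y (mem_filter.mp hy).1).2, (mem_filter.mp hy).2⟩⟩
  · exact (Nat.cast_le.mpr (card_filter_le _ _)).trans_lt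
      (hN_card.trans_lt (Nat.choose_mul_one_add_two_div_pow_lt ha han hε hε1))
  obtain ⟨x', hx', hx'a, hxx', hx'x⟩ :=
    EuclideanSpace.exists_sparse_unit_dist_le hx ha hsmall.le hd₁_half
  obtain ⟨y, hyN, hx'y⟩ := hN_cover x' hx' hx'a
  have hband := EuclideanSpace.bandMass_le_bandMass_add_dist hx' (hN y hyN).1
    (L' := 1 / (2 * a)) (U' := 4 / b) (le_of_eq (by field_simp))
    (by rw [mul_one_div]; exact div_le_div_of_nonneg_right (by norm_num) (by linarith))
    fun i hi _ => hx'x i hi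
  change d₂ ≤ EuclideanSpace.bandMass x (1 / a) (1 / b) at hbig
  have hsqrt : √(2 * d₁) ≤ 2 * √d₁ :=
    Real.sqrt_le_iff.mpr ⟨by positivity, by nlinarith [Real.sq_sqrt hd₁.le]⟩
  exact ⟨y, mem_filter.mpr ⟨hyN, by linarith⟩, by linarith [dist_triangle x x' y]⟩

/-- net lemma. Suppose `0 < d₁ ≤ 0.1` and `57√d₁ < d₂ < 1`, and let
`1 ≤ a ≤ n`. Then there is a finite set `SigmaV` of unit vectors with
`|SigmaV| < (3/√d₁)^(2a)·(ne/a)^a` such that every point of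
`V = {x ∈ S^{n-1} : ∑_{|x_i|² ≤ 1/a} |x_i|² < d₁, ∑_{1/a < |x_i|² ≤ 1/b} |x_i|² ≥ d₂}`
lies within distance `3√d₁` of `SigmaV`, and every `y ∈ SigmaV` has at most `a` nonzero
coordinates and satisfies `∑_{1/(2a) < |y_i|² ≤ 4/b} |y_i|² ≥ d₂ − 57√d₁`. -/
theorem stmt5 (n : ℕ) (hn : 0 < n) (a : ℕ) (ha : 1 ≤ a) (han : a ≤ n)
    (b : ℝ) (hb : 1 ≤ b) (d₁ d₂ : ℝ) (hd₁ : 0 < d₁) (hd₁' : d₁ ≤ 0.1)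
    (hd₂l : 57 * Real.sqrt d₁ < d₂) (hd₂u : d₂ < 1) :
    ∃ SigmaV : Finset (EuclideanSpace ℂ (Fin n)),
      (∀ y ∈ SigmaV, ‖y‖ = 1) ∧
      ((SigmaV.card : ℝ) < (3 / Real.sqrt d₁) ^ (2 * a) * ((n : ℝ) * Real.exp 1 / a) ^ a) ∧
      (∀ x : EuclideanSpace ℂ (Fin n), ‖x‖ = 1 →
        (∑ i, if ‖x i‖ ^ 2 ≤ 1 / (a : ℝ) then ‖x i‖ ^ 2 else 0) < d₁ →
        d₂ ≤ (∑ i, if 1 / (a : ℝ) < ‖x i‖ ^ 2 ∧ ‖x i‖ ^ 2 ≤ 1 / b then ‖x i‖ ^ 2 else 0) →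
        ∃ y ∈ SigmaV, dist x y ≤ 3 * Real.sqrt d₁) ∧
      (∀ y ∈ SigmaV,
        (Function.support fun i => y i).ncard ≤ a ∧
        d₂ - 57 * Real.sqrt d₁ ≤
          ∑ i, if 1 / (2 * (a : ℝ)) < ‖y i‖ ^ 2 ∧ ‖y i‖ ^ 2 ≤ 4 / b then ‖y i‖ ^ 2 else 0) :=
  stmt5_general n a ha han b hb d₁ d₂ hd₁ hd₁'
end

section
/- Let a₁,…,a_n ≥ 0 with Σᵢ aᵢ = a > 0, fix δ ∈ (0,1) and n a positive integer with n^{δ−1} ≤ 1, and let b₁,…,b_n be independent random variables with bᵢ = aᵢ·δᵢ where the δᵢ are i.i.d. Bernoulli with P(δᵢ = 1) = n^{δ−1} and P(δᵢ = 0) = 1 − n^{δ−1}. Then for every t with 0 ≤ t ≤ 1, P[ Σᵢ bᵢ ≤ n^{δ−1}·t·a ] ≤ 1 − (1 − t)²·a/(a + (n^{1−δ} − 1)·maxᵢ aᵢ). -/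
/-!
Write `X = ∑ aᵢ δᵢ` and `p = n^(δ-1)`, so that `n^(1-δ) = 1/p`. Then `E X = p a` and, by pairwise
independence, `E X² = (p a)² + p (1 - p) ∑ aᵢ² ≤ p a (p a + (1 - p) maxᵢ aᵢ)`. The Paley–Zygmund
inequality `P(X > t E X) ≥ (1 - t)² (E X)² / E X²`, which is Cauchy–Schwarz applied to
`X · 1{X > t E X}`, bounds the probability of the complementary event.
-/

open MeasureTheory ProbabilityTheory unitInterval

noncomputable def bernoulliRV (p : ℝ) : Measure ℝ :=
  ENNReal.ofReal p • Measure.dirac (1 : ℝ) + ENNReal.ofReal (1 - p) • Measure.dirac (0 : ℝ)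

section Moments

variable {Ω : Type*} [MeasurableSpace Ω] {μ : Measure Ω} {X : Ω → ℝ}

lemma sq_integral_le_measureReal_univ_mul_integral_sq [IsFiniteMeasure μ] (hX0 : 0 ≤ᵐ[μ] X)
    (hX : MemLp X 2 μ) : (∫ ω, X ω ∂μ) ^ 2 ≤ μ.real Set.univ * ∫ ω, X ω ^ 2 ∂μ := by
  have hsqrt {x : ℝ} (hx : 0 ≤ x) : (x ^ (1 / 2 : ℝ)) ^ 2 = x := by
    rw [← Real.sqrt_eq_rpow, Real.sq_sqrt hx]
  have holder := integral_mul_le_Lp_mul_Lq_of_nonneg Real.HolderConjugate.two_two hX0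
    (Filter.Eventually.of_forall fun _ => zero_le_one) (by simpa using hX) (memLp_const (1 : ℝ))
  simp only [mul_one, Real.rpow_two, one_pow, integral_const, smul_eq_mul] at holder
  calc (∫ ω, X ω ∂μ) ^ 2
      ≤ ((∫ ω, X ω ^ 2 ∂μ) ^ (1 / 2 : ℝ) * (μ.real Set.univ) ^ (1 / 2 : ℝ)) ^ 2 :=
        pow_le_pow_left₀ (integral_nonneg_of_ae hX0) holder 2
    _ = μ.real Set.univ * ∫ ω, X ω ^ 2 ∂μ := by
        rw [mul_pow, hsqrt (integral_nonneg fun _ => sq_nonneg _), hsqrt measureReal_nonneg,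
          mul_comm]

theorem paley_zygmund [IsProbabilityMeasure μ] (hX0 : 0 ≤ᵐ[μ] X) (hX : MemLp X 2 μ)
    {θ : ℝ} (hθ0 : 0 ≤ θ) (hθ1 : θ ≤ 1) :
    (1 - θ) ^ 2 * μ[X] ^ 2 ≤ μ.real {ω | θ * μ[X] < X ω} * μ[X ^ 2] := by
  set A := {ω | θ * μ[X] < X ω}
  have hA : NullMeasurableSet A μ :=
    nullMeasurableSet_lt aemeasurable_const hX.aestronglyMeasurable.aemeasurable
  have hXint : Integrable X μ := hX.integrable one_le_two
  have hmean0 : 0 ≤ μ[X] := integral_nonneg_of_ae hX0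
  have hcompl : ∫ ω in Aᶜ, X ω ∂μ ≤ θ * μ[X] :=
    calc ∫ ω in Aᶜ, X ω ∂μ ≤ ∫ ω in Aᶜ, θ * μ[X] ∂μ :=
          setIntegral_mono_on₀ hXint.integrableOn integrableOn_const hA.compl
            fun ω hω => not_lt.mp hω
      _ = μ.real Aᶜ * (θ * μ[X]) := by rw [setIntegral_const, smul_eq_mul]
      _ ≤ θ * μ[X] := mul_le_of_le_one_left (by positivity) measureReal_le_one
  have hmass : (1 - θ) * μ[X] ≤ ∫ ω in A, X ω ∂μ := by
    linarith [integral_add_compl₀ hA hXint]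
  have hCS := sq_integral_le_measureReal_univ_mul_integral_sq (μ := μ.restrict A)
    (ae_restrict_of_ae hX0) (hX.restrict A)
  rw [measureReal_restrict_apply_univ] at hCS
  calc (1 - θ) ^ 2 * μ[X] ^ 2 = ((1 - θ) * μ[X]) ^ 2 := by ring
    _ ≤ (∫ ω in A, X ω ∂μ) ^ 2 := pow_le_pow_left₀ (by nlinarith) hmass 2
    _ ≤ μ.real A * ∫ ω in A, X ω ^ 2 ∂μ := hCS
    _ ≤ μ.real A * μ[X ^ 2] := by
        gcongr
        exact setIntegral_le_integral hX.integrable_sq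
          (Filter.Eventually.of_forall fun _ => sq_nonneg _)

lemma integral_sq_sum_of_pairwise_indepFun [IsProbabilityMeasure μ] {ι : Type*}
    {X : ι → Ω → ℝ} {s : Finset ι} (hX : ∀ i ∈ s, MemLp (X i) 2 μ)
    (hind : Set.Pairwise s fun i j => X i ⟂ᵢ[μ] X j) :
    μ[(∑ i ∈ s, X i) ^ 2] = (∑ i ∈ s, μ[X i]) ^ 2 + ∑ i ∈ s, Var[X i; μ] := by
  rw [← IndepFun.variance_sum hX hind, variance_eq_sub (memLp_finsetSum' s hX), Finset.sum_fn,
    integral_finsetSum s fun i hi => (hX i hi).integrable one_le_two]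
  ring

end Moments

lemma bernoulliRV_eq_bernoulliMeasure (p : I) : bernoulliRV p = Ber((1 : ℝ), 0, p) := by
  have h1 : (p : ℝ).toNNReal = toNNReal p := by ext; simp [p.2.1]
  have h2 : (1 - (p : ℝ)).toNNReal = toNNReal (σ p) := by ext; simp [p.2.2]
  simp [bernoulliRV, bernoulliMeasure_def, ENNReal.ofReal, h1, h2]

section BernoulliVariable

variable {Ω : Type*} [MeasurableSpace Ω] {μ : Measure Ω} {X : Ω → ℝ} {p : I}

lemma ae_eq_zero_or_one_of_map_eq_bernoulliMeasure (hX : AEMeasurable X μ)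
    (h : μ.map X = Ber((1 : ℝ), 0, p)) : ∀ᵐ ω ∂μ, X ω = 0 ∨ X ω = 1 := by
  refine ae_of_ae_map (p := fun y => y = 0 ∨ y = 1) hX ?_
  rw [h, ae_iff]
  exact bernoulliMeasure_apply_of_notMem_of_notMem p
    (((measurableSet_singleton 0).union (measurableSet_singleton 1)).compl) (by simp) (by simp)

lemma memLp_of_map_eq_bernoulliMeasure [IsFiniteMeasure μ] (hX : AEMeasurable X μ)
    (h : μ.map X = Ber((1 : ℝ), 0, p)) (q : ENNReal) : MemLp X q μ := by
  refine .of_bound hX.aestronglyMeasurable 1 ?_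
  filter_upwards [ae_eq_zero_or_one_of_map_eq_bernoulliMeasure hX h] with ω hω
  rcases hω with hω | hω <;> simp [hω]

lemma integral_of_map_eq_bernoulliMeasure (hX : AEMeasurable X μ)
    (h : μ.map X = Ber((1 : ℝ), 0, p)) : μ[X] = (p : ℝ) := by
  rw [← integral_map (f := fun y : ℝ => y) hX aestronglyMeasurable_id, h,
    integral_bernoulliMeasure]
  simp

lemma variance_of_map_eq_bernoulliMeasure (hX : AEMeasurable X μ)
    (h : μ.map X = Ber((1 : ℝ), 0, p)) : Var[X; μ] = (p : ℝ) * (1 - p) := by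
  rw [← variance_id_map hX, h, variance_eq_integral aemeasurable_id, integral_bernoulliMeasure,
    integral_bernoulliMeasure]
  simp only [id_eq, smul_eq_mul, mul_one, mul_zero, add_zero, zero_sub, even_two, Even.neg_pow]
  ring

end BernoulliVariable

lemma sum_sq_le_sum_mul_iSup {ι : Type*} [Fintype ι] {a : ι → ℝ} (ha : ∀ i, 0 ≤ a i) :
    ∑ i, a i ^ 2 ≤ (∑ i, a i) * ⨆ i, a i := by
  rw [Finset.sum_mul]
  gcongr with i
  rw [sq]
  exact mul_le_mul_of_nonneg_left (le_ciSup (Set.finite_range a).bddAbove i) (ha i)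

section WeightedBernoulliSum

variable {Ω : Type*} [MeasurableSpace Ω] {μ : Measure Ω} [IsProbabilityMeasure μ]
  {ι : Type*} [Fintype ι] {ξ : ι → Ω → ℝ} {p : I}

lemma integral_sum_mul_bernoulli (hξ : ∀ i, AEMeasurable (ξ i) μ)
    (hlaw : ∀ i, μ.map (ξ i) = Ber((1 : ℝ), 0, p)) (a : ι → ℝ) :
    μ[fun ω => ∑ i, a i * ξ i ω] = p * ∑ i, a i := by
  have hmean i := integral_of_map_eq_bernoulliMeasure (hξ i) (hlaw i)
  rw [integral_finsetSum _ fun i _ => ((memLp_of_map_eq_bernoulliMeasure (hξ i) (hlaw i) 1)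
    |>.integrable le_rfl).const_mul (a i), Finset.mul_sum]
  simp_rw [integral_const_mul, hmean, mul_comm]

lemma integral_sq_sum_mul_bernoulli (hξ : ∀ i, AEMeasurable (ξ i) μ)
    (hlaw : ∀ i, μ.map (ξ i) = Ber((1 : ℝ), 0, p)) (hind : Pairwise fun i j => ξ i ⟂ᵢ[μ] ξ j)
    (a : ι → ℝ) :
    μ[(fun ω => ∑ i, a i * ξ i ω) ^ 2] = (p * ∑ i, a i) ^ 2 + p * (1 - p) * ∑ i, a i ^ 2 := by
  have hmem i : MemLp (a i • ξ i) 2 μ :=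
    (memLp_of_map_eq_bernoulliMeasure (hξ i) (hlaw i) 2).const_smul (a i)
  have hind' : Set.Pairwise (Finset.univ : Finset ι) fun i j => (a i • ξ i) ⟂ᵢ[μ] (a j • ξ j) :=
    fun i _ j _ hij => (hind hij).comp (measurable_const_mul (a i)) (measurable_const_mul (a j))
  have key := integral_sq_sum_of_pairwise_indepFun (fun i _ => hmem i) hind'
  simp only [Finset.sum_fn, Pi.smul_apply, smul_eq_mul, variance_smul, integral_const_mul,
    integral_of_map_eq_bernoulliMeasure (hξ _) (hlaw _),
    variance_of_map_eq_bernoulliMeasure (hξ _) (hlaw _), ← Finset.sum_mul] at key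
  rw [key]
  ring

lemma integral_sq_sum_mul_bernoulli_le (hξ : ∀ i, AEMeasurable (ξ i) μ)
    (hlaw : ∀ i, μ.map (ξ i) = Ber((1 : ℝ), 0, p)) (hind : Pairwise fun i j => ξ i ⟂ᵢ[μ] ξ j)
    {a : ι → ℝ} (ha : ∀ i, 0 ≤ a i) :
    μ[(fun ω => ∑ i, a i * ξ i ω) ^ 2] ≤
      p * (∑ i, a i) * (p * ∑ i, a i + (1 - p) * ⨆ i, a i) := by
  rw [integral_sq_sum_mul_bernoulli hξ hlaw hind a]
  have hvar : 0 ≤ (p : ℝ) * (1 - p) := mul_nonneg p.2.1 (sub_nonneg.mpr p.2.2)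
  nlinarith [mul_le_mul_of_nonneg_left (sum_sq_le_sum_mul_iSup ha) hvar]

theorem measureReal_sum_mul_bernoulli_le (hξ : ∀ i, AEMeasurable (ξ i) μ)
    (hlaw : ∀ i, μ.map (ξ i) = Ber((1 : ℝ), 0, p)) (hind : Pairwise fun i j => ξ i ⟂ᵢ[μ] ξ j)
    (hp : 0 < (p : ℝ)) {a : ι → ℝ} (ha : ∀ i, 0 ≤ a i) (hs : 0 < ∑ i, a i)
    {t : ℝ} (ht0 : 0 ≤ t) (ht1 : t ≤ 1) :
    μ.real {ω | ∑ i, a i * ξ i ω ≤ p * t * ∑ i, a i} ≤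
      1 - (1 - t) ^ 2 * (∑ i, a i) / (∑ i, a i + ((p : ℝ)⁻¹ - 1) * ⨆ i, a i) := by
  set X := fun ω => ∑ i, a i * ξ i ω
  set s := ∑ i, a i
  set M := ⨆ i, a i
  have hX0 : 0 ≤ᵐ[μ] X := by
    filter_upwards [ae_all_iff.mpr fun i => ae_eq_zero_or_one_of_map_eq_bernoulliMeasure (hξ i)
      (hlaw i)] with ω hω
    refine Finset.sum_nonneg fun i _ => ?_
    rcases hω i with h | h <;> simp [h, ha i]
  have hX : MemLp X 2 μ := memLp_finsetSum _ fun i _ =>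
    (memLp_of_map_eq_bernoulliMeasure (hξ i) (hlaw i) 2).const_mul (a i)
  have hD : 0 < s + ((p : ℝ)⁻¹ - 1) * M := add_pos_of_pos_of_nonneg hs
    (mul_nonneg (sub_nonneg.mpr ((one_le_inv₀ hp).mpr p.2.2)) (Real.iSup_nonneg ha))
  have hPZ := paley_zygmund hX0 hX ht0 ht1
  rw [integral_sum_mul_bernoulli hξ hlaw a] at hPZ
  set B := {ω | t * (p * s) < X ω}
  have hB : NullMeasurableSet B μ :=
    nullMeasurableSet_lt aemeasurable_const hX.aestronglyMeasurable.aemeasurable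
  have hevent : {ω | X ω ≤ p * t * s} = Bᶜ := by
    ext ω
    simp only [B, Set.mem_ofPred_eq, Set.mem_compl_iff, not_lt]
    ring_nf
  rw [hevent, measureReal_compl₀ hB, probReal_univ, sub_le_sub_iff_left, div_le_iff₀ hD]
  have hq : 0 ≤ μ.real B := measureReal_nonneg
  refine le_of_mul_le_mul_right ?_ (by positivity : 0 < p * (p * s))
  calc (1 - t) ^ 2 * s * (p * (p * s)) = (1 - t) ^ 2 * (p * s) ^ 2 := by ring
    _ ≤ μ.real B * μ[X ^ 2] := hPZ
    _ ≤ μ.real B * (p * s * (p * s + (1 - p) * M)) := by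
        gcongr
        exact integral_sq_sum_mul_bernoulli_le hξ hlaw hind ha
    _ = μ.real B * (s + ((p : ℝ)⁻¹ - 1) * M) * (p * (p * s)) := by field_simp

end WeightedBernoulliSum

theorem stmt12_general (δ : ℝ) (n : ℕ) (hn : 0 < n)
    (hp : (n : ℝ) ^ (δ - 1) ≤ 1)
    (a : Fin n → ℝ) (ha : ∀ i, 0 ≤ a i) (s : ℝ) (hs : s = ∑ i, a i) (hs0 : 0 < s)
    (Ω : Type) [MeasureSpace Ω] [IsProbabilityMeasure (ℙ : Measure Ω)]
    (dl : Fin n → Ω → ℝ) (hmeas : ∀ i, Measurable (dl i))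
    (hdist : ∀ i, Measure.map (dl i) ℙ = bernoulliRV ((n : ℝ) ^ (δ - 1)))
    (hindep : iIndepFun dl ℙ)
    (t : ℝ) (ht0 : 0 ≤ t) (ht1 : t ≤ 1) :
    ℙ {ω | (∑ i, a i * dl i ω) ≤ (n : ℝ) ^ (δ - 1) * t * s} ≤
      ENNReal.ofReal
        (1 - (1 - t) ^ 2 * s / (s + ((n : ℝ) ^ (1 - δ) - 1) * (⨆ i, a i))) := by
  have hp0 : 0 < (n : ℝ) ^ (δ - 1) := Real.rpow_pos_of_pos (Nat.cast_pos.mpr hn) _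
  let p : I := ⟨(n : ℝ) ^ (δ - 1), hp0.le, hp⟩
  have hinv : (n : ℝ) ^ (1 - δ) = (p : ℝ)⁻¹ := by
    rw [← Real.rpow_neg (Nat.cast_nonneg n), neg_sub]
  subst hs
  rw [hinv, ← ENNReal.ofReal_toReal (measure_ne_top _ _)]
  exact ENNReal.ofReal_le_ofReal <| measureReal_sum_mul_bernoulli_le
    (fun i => (hmeas i).aemeasurable) (fun i => (hdist i).trans (bernoulliRV_eq_bernoulliMeasure p))
    (fun i j hij => hindep.indepFun hij) hp0 ha hs0 ht0 ht1

/-- Let `a₁, …, a_n ≥ 0` with `∑ aᵢ = a > 0`, fix `δ ∈ (0,1)` and a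
positive integer `n` with `n^(δ−1) ≤ 1`, and let `bᵢ = aᵢ·δᵢ` with `δᵢ` i.i.d.
Bernoulli(`n^(δ−1)`). Then for `0 ≤ t ≤ 1`,
`P[∑ bᵢ ≤ n^(δ−1) t a] ≤ 1 − (1 − t)²·a/(a + (n^(1−δ) − 1)·max aᵢ)`. -/
theorem stmt12 (δ : ℝ) (hδ : δ ∈ Set.Ioo (0 : ℝ) 1) (n : ℕ) (hn : 0 < n)
    (hp : (n : ℝ) ^ (δ - 1) ≤ 1)
    (a : Fin n → ℝ) (ha : ∀ i, 0 ≤ a i) (s : ℝ) (hs : s = ∑ i, a i) (hs0 : 0 < s)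
    (Ω : Type) [MeasureSpace Ω] [IsProbabilityMeasure (ℙ : Measure Ω)]
    (dl : Fin n → Ω → ℝ) (hmeas : ∀ i, Measurable (dl i))
    (hdist : ∀ i, Measure.map (dl i) ℙ = bernoulliRV ((n : ℝ) ^ (δ - 1)))
    (hindep : iIndepFun dl ℙ)
    (t : ℝ) (ht0 : 0 ≤ t) (ht1 : t ≤ 1) :
    ℙ {ω | (∑ i, a i * dl i ω) ≤ (n : ℝ) ^ (δ - 1) * t * s} ≤
      ENNReal.ofReal
        (1 - (1 - t) ^ 2 * s / (s + ((n : ℝ) ^ (1 - δ) - 1) * (⨆ i, a i))) :=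
  stmt12_general δ n hn hp a ha s hs hs0 Ω dl hmeas hdist hindep t ht0 ht1
end
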